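/- arXiv:2503.00698 — 5 statements merged into one kernel-verified Lean document; each statement's English description precedes it below -/
import Mathlib

section
/- Fix t ∈ (0,1] and define r₀ = t, r_{k+1} = (1/2) r_k (3 - r_k²), E_k = 1 - r_k. Then there exists an index K such that for all k ≥ K, E_{k+1} ≤ (5/8) E_k; consequently E_k → 0 geometrically, i.e., there exist C > 0 and k₀ such that E_k ≤ C (5/8)^k for all k ≥ k₀. -/
/-!
With `e = 1 - r`, one Newton step reads `e ↦ e² (3 - e) / 2 = e · (e (3 - e) / 2)`.
The factor `e (3 - e) / 2` is increasing on `[0, 3/2]` and equals `1` at `e = 1`, so from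
`e₀ ∈ [0, 1)` the errors stay in `[0, 1)`, decrease, and are bounded by `q^k e₀` with
`q = e₀ (3 - e₀) / 2 < 1`. Once the error is below `5/12` the factor is at most `5/8`,
and contraction by `5/8` gives the geometric bound.
-/

open Filter Topology

lemma exists_pos_le_mul_pow_of_le_mul {u : ℕ → ℝ} {c : ℝ} (hc : 0 < c) {K : ℕ}
    (h : ∀ k ≥ K, u (k + 1) ≤ c * u k) : ∃ C > 0, ∀ k ≥ K, u k ≤ C * c ^ k := by
  have tail (n : ℕ) : u (K + n) ≤ c ^ n * u K :=
    le_geom (u := fun n ↦ u (K + n)) hc.le n fun k _ ↦ h (K + k) (Nat.le_add_right K k)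
  refine ⟨max (u K) 1 / c ^ K, by positivity, fun k hk ↦ ?_⟩
  obtain ⟨n, rfl⟩ := Nat.exists_eq_add_of_le hk
  calc u (K + n) ≤ c ^ n * u K := tail n
    _ ≤ c ^ n * max (u K) 1 := by gcongr; exact le_max_left _ _
    _ = max (u K) 1 / c ^ K * c ^ (K + n) := by rw [pow_add]; field_simp

noncomputable def errorMap (e : ℝ) : ℝ := e ^ 2 * (3 - e) / 2

lemma one_sub_newton_step (r : ℝ) : 1 - (1 / 2) * r * (3 - r ^ 2) = errorMap (1 - r) := by
  unfold errorMap; ring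

lemma errorMap_nonneg {e : ℝ} (he : e ≤ 3) : 0 ≤ errorMap e := by
  have : 0 ≤ 3 - e := by linarith
  unfold errorMap
  positivity

lemma errorMap_lt_one {e : ℝ} (h0 : 0 ≤ e) (h1 : e < 1) : errorMap e < 1 := by
  unfold errorMap
  nlinarith [mul_pos (mul_pos (sub_pos.2 h1) (sub_pos.2 h1)) (by linarith : 0 < 2 + e)]

lemma errorMap_le_mul {e y : ℝ} (h0 : 0 ≤ e) (hey : e ≤ y) (hy : e + y ≤ 3) :
    errorMap e ≤ y * (3 - y) / 2 * e := by
  unfold errorMap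
  nlinarith [mul_nonneg h0 (mul_nonneg (sub_nonneg.2 hey) (by linarith : 0 ≤ 3 - e - y))]

section ErrorSequence

variable {e : ℕ → ℝ}

lemma mem_Ico_of_errorMap (he : ∀ k, e (k + 1) = errorMap (e k)) (h0 : e 0 ∈ Set.Ico 0 1)
    (k : ℕ) : e k ∈ Set.Ico 0 1 := by
  induction k with
  | zero => exact h0
  | succ k ih =>
    rw [he]
    exact ⟨errorMap_nonneg (by linarith [ih.2]), errorMap_lt_one ih.1 ih.2⟩

lemma antitone_of_errorMap (he : ∀ k, e (k + 1) = errorMap (e k)) (h0 : e 0 ∈ Set.Ico 0 1) :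
    Antitone e := by
  refine antitone_nat_of_succ_le fun k ↦ ?_
  obtain ⟨hk0, hk1⟩ := mem_Ico_of_errorMap he h0 k
  rw [he]
  calc errorMap (e k) ≤ 1 * (3 - 1) / 2 * e k := errorMap_le_mul hk0 hk1.le (by linarith)
    _ = e k := by ring

lemma le_pow_mul_of_errorMap (he : ∀ k, e (k + 1) = errorMap (e k)) (h0 : e 0 ∈ Set.Ico 0 1)
    (k : ℕ) : e k ≤ (e 0 * (3 - e 0) / 2) ^ k * e 0 := by
  refine le_geom (by nlinarith [h0.1, h0.2]) k fun j _ ↦ ?_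
  rw [he]
  exact errorMap_le_mul (mem_Ico_of_errorMap he h0 j).1 (antitone_of_errorMap he h0 (Nat.zero_le j))
    (by linarith [(mem_Ico_of_errorMap he h0 j).2, h0.2])

lemma tendsto_zero_of_errorMap (he : ∀ k, e (k + 1) = errorMap (e k)) (h0 : e 0 ∈ Set.Ico 0 1) :
    Tendsto e atTop (𝓝 0) := by
  have hq : Tendsto (fun k ↦ (e 0 * (3 - e 0) / 2) ^ k * e 0) atTop (𝓝 0) := by
    simpa using (tendsto_pow_atTop_nhds_zero_of_lt_one (by nlinarith [h0.1, h0.2])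
      (by nlinarith [h0.1, h0.2])).mul_const (e 0)
  exact squeeze_zero (fun k ↦ (mem_Ico_of_errorMap he h0 k).1) (le_pow_mul_of_errorMap he h0) hq

lemma exists_contraction_of_errorMap (he : ∀ k, e (k + 1) = errorMap (e k))
    (h0 : e 0 ∈ Set.Ico 0 1) : ∃ K, ∀ k ≥ K, e (k + 1) ≤ 5 / 8 * e k := by
  obtain ⟨K, hK⟩ := eventually_atTop.1 <|
    (tendsto_order.1 (tendsto_zero_of_errorMap he h0)).2 (5 / 12) (by norm_num)
  refine ⟨K, fun k hk ↦ ?_⟩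
  have hk0 := (mem_Ico_of_errorMap he h0 k).1
  rw [he]
  calc errorMap (e k) ≤ 5 / 12 * (3 - 5 / 12) / 2 * e k :=
        errorMap_le_mul hk0 (hK k hk).le (by linarith [hK k hk])
    _ ≤ 5 / 8 * e k := by nlinarith

end ErrorSequence

/-- Eventually the error `E_k = 1 - r_k` contracts by a factor `5/8` each step,
hence decays geometrically. -/
theorem stmt_7 (t : ℝ) (ht : t ∈ Set.Ioc (0 : ℝ) 1) (r E : ℕ → ℝ) (hr0 : r 0 = t)
    (hrec : ∀ k, r (k + 1) = (1 / 2) * r k * (3 - (r k) ^ 2))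
    (hE : ∀ k, E k = 1 - r k) :
    (∃ K, ∀ k ≥ K, E (k + 1) ≤ (5 / 8) * E k) ∧
      (∃ C > (0 : ℝ), ∃ k₀, ∀ k ≥ k₀, E k ≤ C * (5 / 8) ^ k) := by
  have hstep (k : ℕ) : E (k + 1) = errorMap (E k) := by
    rw [hE, hE, hrec, one_sub_newton_step]
  have h0 : E 0 ∈ Set.Ico 0 1 := by
    rw [hE, hr0]; exact ⟨by linarith [ht.2], by linarith [ht.1]⟩
  obtain ⟨K, hK⟩ := exists_contraction_of_errorMap hstep h0
  obtain ⟨C, hC, hCK⟩ := exists_pos_le_mul_pow_of_le_mul (by norm_num) hK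
  exact ⟨⟨K, hK⟩, C, hC, K, hCK⟩
end

section
/- For x ∈ [-1,1] with x ≠ 0, define f₀ = 1 and f_{k+1} = (1/2) f_k (3 - x² f_k²). Then f_k → 1/|x| as k → ∞, and x² f_k → |x|. -/
/-!
Put `g_k = |x| f_k`. Then `g₀ = |x| ∈ (0, 1]` and `g_{k+1} = g_k (3 - g_k²) / 2`, the Newton
iteration for the inverse square root of `1`. This map sends `[0, 1]` into itself and satisfies
`y ≤ y (3 - y²) / 2` there, so `g_k` increases to a fixed point in `(0, 1]`, which must be `1`.
Hence `f_k = g_k / |x| → 1 / |x|` and `x² f_k = |x| g_k → |x|`.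
-/

open Filter Topology Function Set

noncomputable def invSqrtNewtonStep (y : ℝ) : ℝ := y * (3 - y ^ 2) / 2

lemma le_invSqrtNewtonStep {y : ℝ} (h0 : 0 ≤ y) (h1 : y ≤ 1) : y ≤ invSqrtNewtonStep y := by
  unfold invSqrtNewtonStep
  nlinarith [mul_nonneg h0 (sub_nonneg.2 h1)]

lemma invSqrtNewtonStep_le_one {y : ℝ} (h0 : 0 ≤ y) : invSqrtNewtonStep y ≤ 1 := by
  have : 1 - invSqrtNewtonStep y = (1 - y) ^ 2 * (y + 2) / 2 := by
    unfold invSqrtNewtonStep; ring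
  nlinarith [mul_nonneg (sq_nonneg (1 - y)) (by linarith : (0 : ℝ) ≤ y + 2)]

lemma mapsTo_invSqrtNewtonStep : MapsTo invSqrtNewtonStep (Icc 0 1) (Icc 0 1) :=
  fun _ ⟨h0, h1⟩ => ⟨h0.trans (le_invSqrtNewtonStep h0 h1), invSqrtNewtonStep_le_one h0⟩

lemma eq_one_of_isFixedPt_invSqrtNewtonStep {y : ℝ} (h : IsFixedPt invSqrtNewtonStep y)
    (hy : 0 < y) : y = 1 := by
  have hy2 : y * (1 - y ^ 2) = 0 := by
    unfold IsFixedPt invSqrtNewtonStep at h; linarith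
  have : (1 - y) * (1 + y) = 0 := by
    rcases mul_eq_zero.1 hy2 with h | h
    · exact absurd h hy.ne'
    · linarith
  rcases mul_eq_zero.1 this with h | h <;> linarith

theorem tendsto_iterate_invSqrtNewtonStep {a : ℝ} (ha0 : 0 < a) (ha1 : a ≤ 1) :
    Tendsto (fun k => invSqrtNewtonStep^[k] a) atTop (𝓝 1) := by
  have hmem : ∀ k, invSqrtNewtonStep^[k] a ∈ Icc (0 : ℝ) 1 := fun k =>
    mapsTo_invSqrtNewtonStep.iterate k ⟨ha0.le, ha1⟩
  have hmono : Monotone fun k => invSqrtNewtonStep^[k] a := by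
    refine monotone_nat_of_le_succ fun k => ?_
    rw [iterate_succ_apply']
    exact le_invSqrtNewtonStep (hmem k).1 (hmem k).2
  have hbdd : BddAbove (range fun k => invSqrtNewtonStep^[k] a) :=
    ⟨1, by rintro _ ⟨k, rfl⟩; exact (hmem k).2⟩
  have hlim := tendsto_atTop_ciSup hmono hbdd
  have hpos : 0 < ⨆ k, invSqrtNewtonStep^[k] a := ha0.trans_le (le_ciSup hbdd 0)
  have hcont : Continuous invSqrtNewtonStep := by unfold invSqrtNewtonStep; fun_prop
  rwa [← eq_one_of_isFixedPt_invSqrtNewtonStep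
    (isFixedPt_of_tendsto_iterate hlim hcont.continuousAt) hpos]

/-- The Newton iteration `f_{k+1} = (1/2) f_k (3 - x² f_k²)`, `f₀ = 1`, converges to
`1/|x|`, and `x² f_k → |x|`, for `x ∈ [-1,1]`, `x ≠ 0`. -/
theorem stmt_8 (x : ℝ) (hx : x ∈ Set.Icc (-1 : ℝ) 1) (hx0 : x ≠ 0) (f : ℕ → ℝ)
    (hf0 : f 0 = 1)
    (hrec : ∀ k, f (k + 1) = (1 / 2) * f k * (3 - x ^ 2 * (f k) ^ 2)) :
    Filter.Tendsto f Filter.atTop (nhds (1 / |x|)) ∧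
      Filter.Tendsto (fun k => x ^ 2 * f k) Filter.atTop (nhds |x|) := by
  have ha0 : 0 < |x| := abs_pos.2 hx0
  have hscaled : ∀ k, |x| * f k = invSqrtNewtonStep^[k] |x| := by
    intro k
    induction k with
    | zero => simp [hf0]
    | succ k ih =>
      rw [iterate_succ_apply', ← ih, hrec, invSqrtNewtonStep, mul_pow, sq_abs]
      ring
  have hg := tendsto_iterate_invSqrtNewtonStep ha0 (abs_le.2 hx)
  simp only [← hscaled] at hg
  constructor
  · convert hg.const_mul |x|⁻¹ using 2
    · exact (inv_mul_cancel_left₀ ha0.ne' _).symm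
    · rw [mul_one, one_div]
  · convert hg.const_mul |x| using 2
    · rw [← mul_assoc, ← sq, sq_abs]
    · rw [mul_one]
end

section
/- For x ∈ [-1,1] with x ≠ 0, the sequence g_k(x) = x² f_k(x), where f₀ = 1 and f_{k+1} = (1/2) f_k (3 - x² f_k²), satisfies | |x| - g_k(x) | = |x| · E_k where E_k = 1 - |x| f_k ∈ [0,1), and hence |g_k(x) - |x|| ≤ E_k. Moreover g_k(0) = 0 = |0|, so g_k converges to |x| pointwise on all of [-1,1]. -/
/-!
With `r_k = |x| f_k` the Newton step reads `r_{k+1} = r_k (3 - r_k²) / 2`, so the error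
`E_k = 1 - r_k` obeys the cubic recursion `E_{k+1} = E_k² (3 - E_k) / 2` and `g_k = |x| (1 - E_k)`.
For `0 < |x| ≤ 1` we start at `E_0 = 1 - |x| ∈ [0, 1)`, and since `e (3 - e) / 2` is increasing
on `[0, 1]`, every step contracts the error at least by the factor `q = E_0 (3 - E_0) / 2 < 1`.
-/

open Filter Topology

lemma newton_error_step_le {e₀ e : ℝ} (he : 0 ≤ e) (he₀ : e ≤ e₀) (he₁ : e₀ ≤ 1) :
    e ^ 2 * (3 - e) / 2 ≤ e₀ * (3 - e₀) / 2 * e := by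
  have hmono : e * (3 - e) ≤ e₀ * (3 - e₀) := by nlinarith
  nlinarith [mul_le_mul_of_nonneg_left hmono he]

section NewtonError

variable {e : ℕ → ℝ}

lemma newton_error_mem_Icc
    (hrec : ∀ k, e (k + 1) = e k ^ 2 * (3 - e k) / 2) (h0 : 0 ≤ e 0) (h1 : e 0 ≤ 1) (k : ℕ) :
    e k ∈ Set.Icc 0 (e 0) := by
  induction k with
  | zero => exact ⟨h0, le_rfl⟩
  | succ n ih =>
    obtain ⟨hn₀, hn₁⟩ := ih
    rw [hrec]
    refine ⟨by positivity [show (0 : ℝ) ≤ 3 - e n by linarith], ?_⟩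
    calc e n ^ 2 * (3 - e n) / 2 ≤ e 0 * (3 - e 0) / 2 * e n := newton_error_step_le hn₀ hn₁ h1
      _ ≤ 1 * e n := by gcongr; nlinarith
      _ ≤ e 0 := by linarith

lemma newton_error_le_geometric
    (hrec : ∀ k, e (k + 1) = e k ^ 2 * (3 - e k) / 2) (h0 : 0 ≤ e 0) (h1 : e 0 ≤ 1) (k : ℕ) :
    e k ≤ e 0 * (e 0 * (3 - e 0) / 2) ^ k := by
  induction k with
  | zero => simp
  | succ n ih =>
    obtain ⟨hn₀, hn₁⟩ := newton_error_mem_Icc hrec h0 h1 n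
    have hq : 0 ≤ e 0 * (3 - e 0) / 2 := by positivity [show (0 : ℝ) ≤ 3 - e 0 by linarith]
    rw [hrec]
    calc e n ^ 2 * (3 - e n) / 2 ≤ e 0 * (3 - e 0) / 2 * e n := newton_error_step_le hn₀ hn₁ h1
      _ ≤ e 0 * (3 - e 0) / 2 * (e 0 * (e 0 * (3 - e 0) / 2) ^ n) :=
        mul_le_mul_of_nonneg_left ih hq
      _ = e 0 * (e 0 * (3 - e 0) / 2) ^ (n + 1) := by ring

lemma tendsto_newton_error
    (hrec : ∀ k, e (k + 1) = e k ^ 2 * (3 - e k) / 2) (h0 : 0 ≤ e 0) (h1 : e 0 < 1) :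
    Tendsto e atTop (𝓝 0) := by
  have hq₀ : 0 ≤ e 0 * (3 - e 0) / 2 := by positivity [show (0 : ℝ) ≤ 3 - e 0 by linarith]
  have hq₁ : e 0 * (3 - e 0) / 2 < 1 := by nlinarith
  have hgeom := (tendsto_pow_atTop_nhds_zero_of_lt_one hq₀ hq₁).const_mul (e 0)
  rw [mul_zero] at hgeom
  exact squeeze_zero (fun k => (newton_error_mem_Icc hrec h0 h1.le k).1)
    (newton_error_le_geometric hrec h0 h1.le) hgeom

end NewtonError
/-- The approximants `g_k(x) = x² f_k(x)` to `|x|` satisfy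
`||x| - g_k(x)| = |x| E_k` with `E_k = 1 - |x| f_k ∈ [0,1)` for `x ≠ 0`, hence
`|g_k(x) - |x|| ≤ E_k`; moreover `g_k(0) = 0` and `g_k → |x|` pointwise on `[-1,1]`. -/
theorem stmt_9 (f : ℝ → ℕ → ℝ) (E : ℝ → ℕ → ℝ)
    (hf0 : ∀ x, f x 0 = 1)
    (hrec : ∀ x k, f x (k + 1) = (1 / 2) * f x k * (3 - x ^ 2 * (f x k) ^ 2))
    (hE : ∀ x k, E x k = 1 - |x| * f x k) :
    (∀ x ∈ Set.Icc (-1 : ℝ) 1, x ≠ 0 → ∀ k,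
        |(|x|) - x ^ 2 * f x k| = |x| * E x k ∧
        E x k ∈ Set.Ico (0 : ℝ) 1 ∧
        |x ^ 2 * f x k - (|x|)| ≤ E x k) ∧
    (∀ k, (0 : ℝ) ^ 2 * f 0 k = |(0 : ℝ)|) ∧
    (∀ x ∈ Set.Icc (-1 : ℝ) 1,
        Filter.Tendsto (fun k => x ^ 2 * f x k) Filter.atTop (nhds |x|)) := by
  have hg : ∀ x k, x ^ 2 * f x k = |x| * (1 - E x k) := fun x k => by
    rw [hE, ← sq_abs]; ring
  have hErec : ∀ x k, E x (k + 1) = E x k ^ 2 * (3 - E x k) / 2 := fun x k => by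
    rw [hE, hE, hrec, ← sq_abs]; ring
  have hE0 : ∀ x ∈ Set.Icc (-1 : ℝ) 1, x ≠ 0 → 0 ≤ E x 0 ∧ E x 0 < 1 := fun x hx hx0 => by
    rw [hE, hf0, mul_one, sub_nonneg, sub_lt_self_iff, abs_pos, abs_le]
    exact ⟨hx, hx0⟩
  refine ⟨fun x hx hx0 k => ?_, fun k => by simp, fun x hx => ?_⟩
  · obtain ⟨h0, h1⟩ := hE0 x hx hx0
    obtain ⟨hk₀, hk₁⟩ := newton_error_mem_Icc (hErec x) h0 h1.le k
    have habs : |(|x|) - x ^ 2 * f x k| = |x| * E x k := by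
      rw [hg, show |x| - |x| * (1 - E x k) = |x| * E x k by ring]
      exact abs_of_nonneg (by positivity)
    refine ⟨habs, ⟨hk₀, hk₁.trans_lt h1⟩, ?_⟩
    rw [abs_sub_comm, habs]
    exact mul_le_of_le_one_left hk₀ (abs_le.mpr hx)
  · rcases eq_or_ne x 0 with rfl | hx0
    · simp
    obtain ⟨h0, h1⟩ := hE0 x hx hx0
    have hlim : Tendsto (fun k => |x| * (1 - E x k)) atTop (𝓝 (|x| * (1 - 0))) :=
      (tendsto_const_nhds.sub (tendsto_newton_error (hErec x) h0 h1)).const_mul |x|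
    rw [sub_zero, mul_one] at hlim
    simpa only [hg] using hlim
end

section
/- For each k ≥ 0, the function f_k defined by f₀(x) = 1 and f_{k+1}(x) = (1/2) f_k(x) (3 - x² f_k(x)²) is a polynomial in x of degree exactly 3^k - 1 for k ≥ 1 (and degree 0 for k = 0), and f_k is an even polynomial. -/
open Polynomial

/-!
Writing `d_k` for the degree of `f_k`, the leading term of `3 - X² f_k²` is that of `-X² f_k²`, so
`d_{k+1} = d_k + (2 d_k + 2) = 3 d_k + 2`, i.e. `d_k + 1` triples at every step. Evenness is
preserved because the step only involves `f_k` and `X²`.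
-/

section NewtonStep

variable {R : Type*} [CommRing R]

lemma natDegree_three_sub_X_sq_mul_sq [IsDomain R] {p : R[X]} (hp : p ≠ 0) :
    (3 - X ^ 2 * p ^ 2).natDegree = 2 * p.natDegree + 2 := by
  have hXp : (X ^ 2 * p ^ 2 : R[X]).natDegree = 2 * p.natDegree + 2 := by
    rw [natDegree_mul (pow_ne_zero _ X_ne_zero) (pow_ne_zero _ hp), natDegree_pow,
      natDegree_pow, natDegree_X]
    ring
  have hlt : (3 : R[X]).natDegree < (X ^ 2 * p ^ 2 : R[X]).natDegree := by
    rw [hXp, natDegree_ofNat]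
    omega
  exact (natDegree_sub_eq_right_of_natDegree_lt hlt).trans hXp

lemma three_sub_X_sq_mul_sq_ne_zero [IsDomain R] {p : R[X]} (hp : p ≠ 0) :
    (3 - X ^ 2 * p ^ 2 : R[X]) ≠ 0 :=
  ne_zero_of_natDegree_gt (n := 0) <| by
    rw [natDegree_three_sub_X_sq_mul_sq hp]
    omega

lemma newtonStep_ne_zero [IsDomain R] {c : R} (hc : c ≠ 0) {p : R[X]} (hp : p ≠ 0) :
    C c * p * (3 - X ^ 2 * p ^ 2) ≠ 0 :=
  mul_ne_zero (mul_ne_zero (C_ne_zero.mpr hc) hp) (three_sub_X_sq_mul_sq_ne_zero hp)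

lemma natDegree_newtonStep [IsDomain R] {c : R} (hc : c ≠ 0) {p : R[X]} (hp : p ≠ 0) :
    (C c * p * (3 - X ^ 2 * p ^ 2)).natDegree = 3 * p.natDegree + 2 := by
  rw [natDegree_mul (mul_ne_zero (C_ne_zero.mpr hc) hp) (three_sub_X_sq_mul_sq_ne_zero hp),
    natDegree_C_mul hc, natDegree_three_sub_X_sq_mul_sq hp]
  ring

lemma newtonStep_comp_neg_X {c : R} {p : R[X]} (hp : p.comp (-X) = p) :
    (C c * p * (3 - X ^ 2 * p ^ 2)).comp (-X) = C c * p * (3 - X ^ 2 * p ^ 2) := by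
  simp only [mul_comp, sub_comp, pow_comp, X_comp, C_comp, ofNat_comp, hp, neg_sq, Nat.cast_ofNat]

end NewtonStep

/-- The Newton iterates `f₀ = 1`, `f_{k+1} = (1/2) f_k (3 - X² f_k²)` are even
polynomials of degree `3^k - 1`. -/
theorem stmt_11 (f : ℕ → Polynomial ℝ) (hf0 : f 0 = 1)
    (hrec : ∀ k, f (k + 1) = Polynomial.C (1 / 2) * f k *
      (3 - Polynomial.X ^ 2 * (f k) ^ 2)) :
    (f 0).natDegree = 0 ∧
    (∀ k, 1 ≤ k → (f k).natDegree = 3 ^ k - 1) ∧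
    (∀ k, (f k).comp (-Polynomial.X) = f k) := by
  have hc : (1 / 2 : ℝ) ≠ 0 := by norm_num
  have hdeg : ∀ k, f k ≠ 0 ∧ (f k).natDegree = 3 ^ k - 1 := by
    intro k
    induction k with
    | zero => simp [hf0]
    | succ k ih =>
      obtain ⟨hne, hk⟩ := ih
      have hpow : 1 ≤ 3 ^ k := Nat.one_le_pow _ _ (by norm_num)
      rw [hrec k, natDegree_newtonStep hc hne, hk, pow_succ]
      exact ⟨newtonStep_ne_zero hc hne, by omega⟩
  refine ⟨(hdeg 0).2, fun k _ => (hdeg k).2, fun k => ?_⟩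
  induction k with
  | zero => simp [hf0]
  | succ k ih => rw [hrec k]; exact newtonStep_comp_neg_X ih
end

section
/- A deep polynomial g = p₁ ∘ p₂ ∘ ... ∘ p_L with layer degrees d₁, ..., d_L ≥ 1, after normalizing each inner layer p₂, ..., p_L to be monic with zero constant term, is determined by N = d₁ + d₂ + ... + d_L - L + 2 free coefficients. In particular, if N < d₁d₂⋯d_L + 1, the set of such composites is a proper subset of the polynomials of degree D = d₁d₂⋯d_L. -/
/-!
If at most one layer has degree `≥ 2`, then `N = D + 1`; so `N < D + 1` forces two nonlinear
layers `pᵢ`, `pⱼ` with `i < j`, and the composite splits as `A ∘ B` with `2 ≤ deg A`, `2 ≤ deg B`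
and `B` monic with zero constant term. Such a composite is never `X ^ D + X`: comparing
`A ∘ B = X ^ D + X` with `X ^ a ∘ B = B ^ a` shows that `B ^ a - X ^ D` has degree at most
`(a - 1) b`, and since `B ^ a - X ^ D = (B - X ^ b) · Σ Bⁱ X^{b(a-1-i)}`, whose second factor has
leading coefficient `a ≠ 0` in degree `(a - 1) b`, this forces `B = X ^ b`. But then `A ∘ B` has
no coefficient in degree `1`.
-/

open Polynomial

namespace Polynomial

variable {R : Type*}

def IsNormalized [Semiring R] (p : R[X]) : Prop :=
  p.Monic ∧ p.coeff 0 = 0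

section Composite

theorem foldr_comp_append [CommSemiring R] (l₁ l₂ : List R[X]) :
    (l₁ ++ l₂).foldr comp X = (l₁.foldr comp X).comp (l₂.foldr comp X) := by
  induction l₁ with
  | nil => simp
  | cons r l ih => rw [List.cons_append, List.foldr_cons, List.foldr_cons, ih, comp_assoc]

variable [Semiring R] [Nontrivial R] [NoZeroDivisors R]

theorem natDegree_foldr_comp (l : List R[X]) :
    (l.foldr comp X).natDegree = (l.map natDegree).prod := by
  induction l with
  | nil => simp
  | cons r l ih => simp [natDegree_comp, ih]

theorem natDegree_foldr_comp_ofFn {n : ℕ} (p : Fin n → R[X]) :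
    ((List.ofFn p).foldr comp X).natDegree = ∏ i, (p i).natDegree := by
  rw [natDegree_foldr_comp, List.map_ofFn, List.prod_ofFn]
  rfl

theorem natDegree_le_natDegree_foldr_comp {l : List R[X]} (hl : ∀ r ∈ l, r.natDegree ≠ 0)
    {q : R[X]} (hq : q ∈ l) : q.natDegree ≤ (l.foldr comp X).natDegree := by
  rw [natDegree_foldr_comp]
  refine List.single_le_prod ?_ _ (List.mem_map_of_mem hq)
  simpa [Nat.one_le_iff_ne_zero] using hl

end Composite

section Normalized

variable [CommSemiring R] {p q : R[X]}

theorem isNormalized_X : IsNormalized (X : R[X]) :=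
  ⟨monic_X, coeff_X_zero⟩

variable [Nontrivial R]

theorem IsNormalized.natDegree_ne_zero (hp : IsNormalized p) : p.natDegree ≠ 0 :=
  (hp.1.natDegree_pos.2 fun h => by simp [h, IsNormalized] at hp).ne'

theorem IsNormalized.comp (hp : IsNormalized p) (hq : IsNormalized q) :
    IsNormalized (p.comp q) := by
  refine ⟨hp.1.comp hq.1 hq.natDegree_ne_zero, ?_⟩
  rw [coeff_zero_eq_eval_zero, eval_comp, ← coeff_zero_eq_eval_zero, hq.2,
    ← coeff_zero_eq_eval_zero, hp.2]

theorem isNormalized_foldr_comp {l : List R[X]} (hl : ∀ r ∈ l, IsNormalized r) :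
    IsNormalized (l.foldr comp X) := by
  induction l with
  | nil => exact isNormalized_X
  | cons r l ih =>
    exact (hl r List.mem_cons_self).comp (ih fun s hs => hl s (List.mem_cons_of_mem _ hs))

end Normalized

theorem isMonicOfDegree_X_pow_add_X [Semiring R] [Nontrivial R] {n : ℕ} (hn : 1 < n) :
    IsMonicOfDegree (X ^ n + X : R[X]) n :=
  (isMonicOfDegree_X_pow R n).add_right (by rwa [natDegree_X])

section CharZero

variable [CommRing R] [IsDomain R] [CharZero R]

theorem IsMonicOfDegree.natDegree_sub_X_pow_eq_zero {B : R[X]} {a b : ℕ}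
    (hB : IsMonicOfDegree B b) (ha : 0 < a)
    (h : (B ^ a - X ^ (b * a)).natDegree ≤ b * (a - 1)) :
    (B - X ^ b).natDegree = 0 := by
  set S : R[X] := ∑ i ∈ Finset.range a, B ^ i * (X ^ b) ^ (a - 1 - i)
  have hterm : ∀ i ∈ Finset.range a,
      IsMonicOfDegree (B ^ i * (X ^ b) ^ (a - 1 - i)) (b * (a - 1)) := by
    intro i hi
    have hia : i ≤ a - 1 := by have := Finset.mem_range.1 hi; omega
    rw [show b * (a - 1) = b * i + b * (a - 1 - i) by rw [← mul_add, Nat.add_sub_cancel' hia]]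
    exact (hB.pow i).mul ((isMonicOfDegree_X_pow R b).pow _)
  have hS : S.coeff (b * (a - 1)) = a := by
    rw [finsetSum_coeff, Finset.sum_congr rfl fun i hi => ((isMonicOfDegree_iff _ _).1
      (hterm i hi)).2]
    simp
  have hS0 : S.coeff (b * (a - 1)) ≠ 0 := by rw [hS]; exact_mod_cast ha.ne'
  have hSdeg : S.natDegree = b * (a - 1) :=
    le_antisymm (natDegree_sum_le_of_forall_le _ _ fun i hi => (hterm i hi).natDegree_eq.le)
      (le_natDegree_of_ne_zero hS0)
  by_contra hne
  have hS_ne : S ≠ 0 := fun h0 => hS0 (by rw [h0, coeff_zero])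
  have hsub : B - X ^ b ≠ 0 := fun h0 => hne (by rw [h0, natDegree_zero])
  have hfactor : S * (B - X ^ b) = B ^ a - X ^ (b * a) := by rw [geom_sum₂_mul, pow_mul]
  have := natDegree_mul hS_ne hsub
  rw [hfactor, hSdeg] at this
  omega

theorem X_pow_add_X_ne_comp {A B : R[X]} (hA : 2 ≤ A.natDegree) (hB : 2 ≤ B.natDegree)
    (hBn : IsNormalized B) : X ^ (A.natDegree * B.natDegree) + X ≠ A.comp B := by
  set a := A.natDegree
  set b := B.natDegree
  intro hg
  have hg' := isMonicOfDegree_X_pow_add_X (R := R) (n := a * b) (by nlinarith)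
  have hAm : IsMonicOfDegree A a := by
    refine ⟨rfl, ?_⟩
    have := leadingCoeff_comp (p := A) (q := B) (by omega)
    rwa [← hg, hg'.leadingCoeff_eq, hBn.1.leadingCoeff, one_pow, mul_one, eq_comm] at this
  obtain ⟨A', hA_eq, hA'⟩ := hAm.exists_natDegree_lt (by omega)
  have hpow : B ^ a - X ^ (b * a) = X - A'.comp B := by
    rw [hA_eq, add_comp, X_pow_comp] at hg
    rw [mul_comm b a]
    linear_combination -hg
  have hpow_deg : (B ^ a - X ^ (b * a)).natDegree ≤ b * (a - 1) := by
    have hA'_deg : (A'.comp B).natDegree ≤ b * (a - 1) := by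
      rw [natDegree_comp]
      nlinarith [Nat.le_sub_one_of_lt hA']
    rw [hpow, natDegree_sub_le_iff_left hA'_deg, natDegree_X]
    nlinarith [Nat.le_sub_one_of_lt hA]
  have hBX : B = X ^ b := by
    have h0 := eq_C_of_natDegree_eq_zero ((IsMonicOfDegree.mk rfl hBn.1).natDegree_sub_X_pow_eq_zero
      (by omega) hpow_deg)
    rwa [coeff_sub, hBn.2, coeff_X_pow, if_neg (by omega), sub_zero, map_zero, sub_eq_zero] at h0
  have h1 := congrArg (coeff · 1) hg
  simp only [coeff_add, coeff_X_pow, coeff_X_one] at h1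
  rw [hBX, ← expand_eq_comp_X_pow, coeff_expand (by omega),
    if_neg (show ¬1 = a * b by nlinarith), if_neg (show ¬b ∣ 1 by rw [Nat.dvd_one]; omega)] at h1
  simp at h1

theorem X_pow_add_X_ne_foldr_comp {l₁ l₂ : List R[X]} (hl : ∀ r ∈ l₁ ++ l₂, r.natDegree ≠ 0)
    (hl₂ : ∀ r ∈ l₂, IsNormalized r) {q₁ q₂ : R[X]} (hq₁ : q₁ ∈ l₁) (hq₂ : q₂ ∈ l₂)
    (h₁ : 2 ≤ q₁.natDegree) (h₂ : 2 ≤ q₂.natDegree) :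
    X ^ ((l₁ ++ l₂).foldr comp X).natDegree + X ≠ (l₁ ++ l₂).foldr comp X := by
  rw [foldr_comp_append, natDegree_comp]
  refine X_pow_add_X_ne_comp ?_ ?_ (isNormalized_foldr_comp hl₂)
  · exact h₁.trans (natDegree_le_natDegree_foldr_comp (fun r hr => hl r (by simp [hr])) hq₁)
  · exact h₂.trans (natDegree_le_natDegree_foldr_comp (fun r hr => hl r (by simp [hr])) hq₂)

theorem X_pow_add_X_ne_foldr_comp_ofFn {n : ℕ} (p : Fin n → R[X]) (hp : ∀ k, (p k).natDegree ≠ 0)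
    {i j : Fin n} (hij : i < j) (hnorm : ∀ k, j ≤ k → IsNormalized (p k))
    (hi : 2 ≤ (p i).natDegree) (hj : 2 ≤ (p j).natDegree) :
    X ^ (∏ k, (p k).natDegree) + X ≠ (List.ofFn p).foldr comp X := by
  rw [Fin.lt_def] at hij
  have hsplit := X_pow_add_X_ne_foldr_comp (l₁ := (List.ofFn p).take j)
    (l₂ := (List.ofFn p).drop j) ?_ ?_ (List.mem_take_iff_getElem.2 ⟨i, by simp; omega, by simp⟩)
    (List.mem_drop_iff_getElem.2 ⟨0, by simp, by simp⟩) hi hj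
  · rwa [List.take_append_drop, natDegree_foldr_comp_ofFn] at hsplit
  · rw [List.take_append_drop]
    rintro _ hr
    obtain ⟨k, rfl⟩ := List.mem_ofFn.1 hr
    exact hp k
  · rintro _ hr
    obtain ⟨m, hm, rfl⟩ := List.mem_drop_iff_getElem.1 hr
    rw [List.getElem_ofFn]
    exact hnorm _ (by rw [Fin.le_def]; simp)

end CharZero

end Polynomial

theorem Finset.prod_add_one_le_sum_sub_card_add_two {ι : Type*} [Fintype ι] (d : ι → ℕ)
    (h : {i | 2 ≤ d i}.Subsingleton) : ∏ i, d i + 1 ≤ ∑ i, d i - Fintype.card ι + 2 := by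
  by_cases h0 : ∃ i, d i = 0
  · obtain ⟨i, hi⟩ := h0
    rw [prod_eq_zero (mem_univ i) hi]
    omega
  push Not at h0
  have hsum : ∑ i, d i = ∑ i, (d i - 1) + Fintype.card ι := by
    rw [← card_univ, card_eq_sum_ones, ← sum_add_distrib]
    exact sum_congr rfl fun i _ => by have := h0 i; omega
  by_cases h2 : ∃ i, 2 ≤ d i
  · obtain ⟨i, hi⟩ := h2
    have hone : ∀ j ≠ i, d j = 1 := fun j hj => by
      by_contra hj1
      exact hj (h (show 2 ≤ d j by have := h0 j; omega) hi)
    rw [prod_eq_single i (fun j _ hj => hone j hj) (by simp), hsum,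
      sum_eq_single i (fun j _ hj => by rw [hone j hj, Nat.sub_self]) (by simp)]
    omega
  · push Not at h2
    have hone : ∀ i, d i = 1 := fun i => by have := h0 i; have := h2 i; omega
    simp [hone]

theorem stmt_15_general (L : ℕ) (d : Fin L → ℕ)
    (hN : (∑ i, d i) - L + 2 < (∏ i, d i) + 1) :
    {g : Polynomial ℝ | ∃ p : Fin L → Polynomial ℝ,
        (∀ i, (p i).natDegree = d i) ∧
        (∀ i : Fin L, 1 ≤ (i : ℕ) → (p i).Monic ∧ (p i).coeff 0 = 0) ∧
        g = (List.ofFn p).foldr Polynomial.comp Polynomial.X}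
      ⊂ {g : Polynomial ℝ | g.natDegree = ∏ i, d i} := by
  have hD : ∏ i, d i ≠ 0 := fun h => by rw [h] at hN; omega
  have htwo : {i | 2 ≤ d i}.Nontrivial := by
    refine Set.not_subsingleton_iff.1 fun h => ?_
    have := Finset.prod_add_one_le_sum_sub_card_add_two d h
    rw [Fintype.card_fin] at this
    omega
  obtain ⟨i, hi : 2 ≤ d i, j, hj : 2 ≤ d j, hij⟩ := htwo.exists_lt
  have hdi : d i ≤ ∏ k, d k :=
    Nat.le_of_dvd (Nat.pos_of_ne_zero hD) (Finset.dvd_prod_of_mem d (Finset.mem_univ i))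
  refine (Set.ssubset_iff_of_subset ?_).2
    ⟨X ^ ∏ k, d k + X, (isMonicOfDegree_X_pow_add_X (by omega)).natDegree_eq, ?_⟩
  · rintro _ ⟨p, hp, -, rfl⟩
    simp [natDegree_foldr_comp_ofFn, hp]
  · rintro ⟨p, hp, hnorm, hg⟩
    refine X_pow_add_X_ne_foldr_comp_ofFn p
      (fun k => hp k ▸ Finset.prod_ne_zero_iff.1 hD k (Finset.mem_univ k)) hij
      (fun k hk => hnorm k (by rw [Fin.lt_def] at hij; rw [Fin.le_def] at hk; omega))
      (hp i ▸ hi) (hp j ▸ hj) ?_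
    simpa [hp] using hg

/-- With normalized inner layers, the set of deep polynomials with layer degrees
`d₁, …, d_L` (having `N = Σ dᵢ - L + 2` free coefficients) is a proper subset of the
polynomials of degree `D = Π dᵢ` whenever `N < D + 1`. -/
theorem stmt_15 (L : ℕ) (hL : 1 ≤ L) (d : Fin L → ℕ) (hd : ∀ i, 1 ≤ d i)
    (hN : (∑ i, d i) - L + 2 < (∏ i, d i) + 1) :
    {g : Polynomial ℝ | ∃ p : Fin L → Polynomial ℝ,
        (∀ i, (p i).natDegree = d i) ∧
        (∀ i : Fin L, 1 ≤ (i : ℕ) → (p i).Monic ∧ (p i).coeff 0 = 0) ∧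
        g = (List.ofFn p).foldr Polynomial.comp Polynomial.X}
      ⊂ {g : Polynomial ℝ | g.natDegree = ∏ i, d i} :=
  stmt_15_general L d hN
end
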